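/- arXiv:2307.01176 — 2 statements merged into one kernel-verified Lean document; each statement's English description precedes it below -/
import Mathlib

section
/- Let β ≠ 0 be real, m > 0, and L > 0. Set K = m⁴/β². Then for every bounded function φ : ℝ → ℂ with |φ(x)| ≤ m for all x, and every twice continuously differentiable L-periodic function v : ℝ → ℂ, defining the energy E = ∫₀^L |v''(x)|² dx + (1/β)·Re ∫₀^L φ(x)²·conj(v'(x))² dx, one has ∫₀^L |v''(x)|² dx ≤ 2E + K ∫₀^L |v(x)|² dx. -/
open Complex (I normSq)
open ComplexConjugate

/-! Integrating by parts over a period gives `∫ |v'|² = -Re ∫ conj v · v''`, so Young's inequality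
yields `2t ∫ |v'|² ≤ ∫ |v''|² + t² ∫ |v|²` for every `t ≥ 0`. The nonlinear term of `E` is bounded
by `(m²/|β|) ∫ |v'|²`, and the choice `t = m²/|β|` absorbs it into `∫ |v''|² + K ∫ |v|²`. -/

theorem Function.Periodic.deriv {𝕜 F : Type*} [NontriviallyNormedField 𝕜] [NormedAddCommGroup F]
    [NormedSpace 𝕜 F] {f : 𝕜 → F} {c : 𝕜} (h : Function.Periodic f c) :
    Function.Periodic (deriv f) c := fun x => by
  rw [← deriv_comp_add_const, funext h]

section Periodic

variable {v : ℝ → ℂ} {L : ℝ}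

theorem integral_conj_mul_deriv_deriv_of_periodic (hv : ContDiff ℝ 2 v)
    (hper : Function.Periodic v L) :
    ∫ x in (0:ℝ)..L, conj (v x) * deriv (deriv v) x =
      -((∫ x in (0:ℝ)..L, ‖deriv v x‖ ^ 2 : ℝ) : ℂ) := by
  have hv' : ContDiff ℝ 1 (deriv v) := hv.iterate_deriv' 1 1
  have hd : ∀ x, HasDerivAt (fun y => conj (v y)) (conj (deriv v x)) x := fun x =>
    ((hv.differentiable (by norm_num)) x).hasDerivAt.star
  have hd2 : ∀ x, HasDerivAt (deriv v) (deriv (deriv v) x) x := fun x =>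
    ((hv'.differentiable one_ne_zero) x).hasDerivAt
  rw [intervalIntegral.integral_mul_deriv_eq_deriv_mul (fun x _ => hd x) (fun x _ => hd2 x)
    ((continuous_star.comp hv'.continuous).intervalIntegrable 0 L)
    ((hv'.continuous_deriv le_rfl).intervalIntegrable 0 L)]
  rw [← intervalIntegral.integral_ofReal]
  push_cast
  simp only [← Complex.conj_mul', by simpa using hper 0, by simpa using hper.deriv 0, sub_self,
    zero_sub]

theorem two_mul_integral_norm_deriv_sq_le (hv : ContDiff ℝ 2 v) (hper : Function.Periodic v L)
    (hL : 0 ≤ L) {t : ℝ} (ht : 0 ≤ t) :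
    2 * t * ∫ x in (0:ℝ)..L, ‖deriv v x‖ ^ 2 ≤
      (∫ x in (0:ℝ)..L, ‖deriv (deriv v) x‖ ^ 2) + t ^ 2 * ∫ x in (0:ℝ)..L, ‖v x‖ ^ 2 := by
  have cv := hv.continuous
  have cv2 : Continuous (deriv (deriv v)) := (hv.iterate_deriv' 1 1).continuous_deriv le_rfl
  have hD : ∫ x in (0:ℝ)..L, ‖deriv v x‖ ^ 2 ≤ ∫ x in (0:ℝ)..L, ‖v x‖ * ‖deriv (deriv v) x‖ := by
    have hIBP := integral_conj_mul_deriv_deriv_of_periodic hv hper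
    calc ∫ x in (0:ℝ)..L, ‖deriv v x‖ ^ 2
        = ‖∫ x in (0:ℝ)..L, conj (v x) * deriv (deriv v) x‖ := by
          rw [hIBP, norm_neg, Complex.norm_real, Real.norm_of_nonneg
            (intervalIntegral.integral_nonneg hL fun x _ => by positivity)]
      _ ≤ ∫ x in (0:ℝ)..L, ‖v x‖ * ‖deriv (deriv v) x‖ :=
          intervalIntegral.norm_integral_le_of_norm_le hL (.of_forall fun x _ => by simp)
            ((cv.norm.mul cv2.norm).intervalIntegrable 0 L)
  -- Young's inequality `2 t a b ≤ b² + t² a²`, integrated.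
  have hYoung : 2 * t * ∫ x in (0:ℝ)..L, ‖v x‖ * ‖deriv (deriv v) x‖ ≤
      ∫ x in (0:ℝ)..L, (‖deriv (deriv v) x‖ ^ 2 + t ^ 2 * ‖v x‖ ^ 2) := by
    rw [← intervalIntegral.integral_const_mul]
    refine intervalIntegral.integral_mono_on hL (Continuous.intervalIntegrable (by fun_prop) _ _)
      (Continuous.intervalIntegrable (by fun_prop) _ _) fun x _ => ?_
    nlinarith [sq_nonneg (‖deriv (deriv v) x‖ - t * ‖v x‖)]
  rw [intervalIntegral.integral_add (Continuous.intervalIntegrable (by fun_prop) _ _)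
    (Continuous.intervalIntegrable (by fun_prop) _ _),
    intervalIntegral.integral_const_mul] at hYoung
  exact (mul_le_mul_of_nonneg_left hD (by positivity)).trans hYoung

end Periodic

theorem norm_integral_mul_conj_sq_le {φ w : ℝ → ℂ} {m a b : ℝ} (hab : a ≤ b)
    (hφ : ∀ x, ‖φ x‖ ≤ m) (hw : Continuous w) :
    ‖∫ x in a..b, φ x ^ 2 * conj (w x) ^ 2‖ ≤ m ^ 2 * ∫ x in a..b, ‖w x‖ ^ 2 := by
  rw [← intervalIntegral.integral_const_mul]
  refine intervalIntegral.norm_integral_le_of_norm_le hab (.of_forall fun x _ => ?_)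
    ((continuous_const.mul (hw.norm.pow 2)).intervalIntegrable a b)
  rw [norm_mul, norm_pow, norm_pow, Complex.norm_conj]
  gcongr
  exact hφ x

theorem damping_energy_coercivity_general (β m L : ℝ) (hL : 0 < L)
    (K : ℝ) (hK : K = m ^ 4 / β ^ 2)
    (φ : ℝ → ℂ) (hφ : ∀ x : ℝ, ‖φ x‖ ≤ m)
    (v : ℝ → ℂ) (hv : ContDiff ℝ 2 v) (hper : Function.Periodic v L)
    (E : ℝ)
    (hE : E = (∫ x in (0:ℝ)..L, ‖deriv (deriv v) x‖ ^ 2)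
      + (1 / β) * (∫ x in (0:ℝ)..L, (φ x) ^ 2 * (conj (deriv v x)) ^ 2).re) :
    (∫ x in (0:ℝ)..L, ‖deriv (deriv v) x‖ ^ 2) ≤
      2 * E + K * ∫ x in (0:ℝ)..L, ‖v x‖ ^ 2 := by
  set D := ∫ x in (0:ℝ)..L, ‖deriv v x‖ ^ 2
  set R := (∫ x in (0:ℝ)..L, (φ x) ^ 2 * (conj (deriv v x)) ^ 2).re
  have hR : |R| ≤ m ^ 2 * D := (Complex.abs_re_le_norm _).trans
    (norm_integral_mul_conj_sq_le hL.le hφ (hv.continuous_deriv one_le_two))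
  have hR' : -(m ^ 2 / |β| * D) ≤ 1 / β * R :=
    calc -(m ^ 2 / |β| * D) = -(|1 / β| * (m ^ 2 * D)) := by rw [abs_div, abs_one]; ring
      _ ≤ -(|1 / β| * |R|) := by gcongr
      _ = -|1 / β * R| := by rw [abs_mul]
      _ ≤ 1 / β * R := neg_abs_le _
  have hD := two_mul_integral_norm_deriv_sq_le hv hper hL.le (t := m ^ 2 / |β|) (by positivity)
  rw [div_pow, sq_abs, ← pow_mul] at hD
  rw [hE, hK]
  linarith

/-- Coercivity of the damping energy functional
`E = ∫₀^L |v''|² + (1/β) Re ∫₀^L φ²·conj(v')²`: with `K = m⁴/β²` one has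
`∫₀^L |v''|² ≤ 2E + K ∫₀^L |v|²` whenever `|φ| ≤ m`. -/
theorem damping_energy_coercivity (β m L : ℝ) (hβ : β ≠ 0) (hm : 0 < m) (hL : 0 < L)
    (K : ℝ) (hK : K = m ^ 4 / β ^ 2)
    (φ : ℝ → ℂ) (hφ : ∀ x : ℝ, ‖φ x‖ ≤ m)
    (v : ℝ → ℂ) (hv : ContDiff ℝ 2 v) (hper : Function.Periodic v L)
    (E : ℝ)
    (hE : E = (∫ x in (0:ℝ)..L, ‖deriv (deriv v) x‖ ^ 2)
      + (1 / β) * (∫ x in (0:ℝ)..L, (φ x) ^ 2 * (conj (deriv v x)) ^ 2).re) :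
    (∫ x in (0:ℝ)..L, ‖deriv (deriv v) x‖ ^ 2) ≤
      2 * E + K * ∫ x in (0:ℝ)..L, ‖v x‖ ^ 2 :=
  damping_energy_coercivity_general β m L hL K hK φ hφ v hv hper E hE
end

section
/- For all T > 0, d > 0, and n ∈ ℕ₀ there exists a constant C > 0 such that for every N ∈ ℕ and every t ≥ 0: (1/N) · Σ_{j ∈ ℤ, 1 ≤ |j| ≤ N/2} ( (2πj/(NT))^{2n} · exp( -2d (2πj/(NT))² t ) ) ≤ C (1+t)^{-1/2 - n}. -/
open scoped Real

open MeasureTheory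

lemma gauss_sum_le (c : ℝ) (hc : 0 < c) (M : ℕ) :
    ∑ k ∈ Finset.range M, Real.exp (-c * ((k : ℝ) + 1) ^ 2) ≤ Real.sqrt (π / c) := by
  have hcont : Continuous fun x : ℝ => Real.exp (-c * x ^ 2) := by continuity
  have hInt : Integrable fun x : ℝ => Real.exp (-c * x ^ 2) := integrable_exp_neg_mul_sq hc
  have step : ∀ k : ℕ, Real.exp (-c * ((k : ℝ) + 1) ^ 2)
      ≤ ∫ x in (k : ℝ)..((k : ℝ) + 1), Real.exp (-c * x ^ 2) := by
    intro k
    have h1 : (∫ _x in (k : ℝ)..((k : ℝ) + 1), Real.exp (-c * ((k : ℝ) + 1) ^ 2))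
        = Real.exp (-c * ((k : ℝ) + 1) ^ 2) := by simp
    rw [← h1]
    apply intervalIntegral.integral_mono_on (by linarith)
      (intervalIntegrable_const) (hcont.intervalIntegrable _ _)
    intro x hx
    have hx0 : 0 ≤ x := le_trans (Nat.cast_nonneg k) hx.1
    have : x ^ 2 ≤ ((k : ℝ) + 1) ^ 2 := by nlinarith [hx.1, hx.2]
    exact Real.exp_le_exp.2 (by nlinarith)
  calc ∑ k ∈ Finset.range M, Real.exp (-c * ((k : ℝ) + 1) ^ 2)
      ≤ ∑ k ∈ Finset.range M, ∫ x in (k : ℝ)..((k : ℝ) + 1), Real.exp (-c * x ^ 2) :=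
        Finset.sum_le_sum fun k _ => step k
    _ = ∫ x in (0 : ℝ)..(M : ℝ), Real.exp (-c * x ^ 2) := by
        have := intervalIntegral.sum_integral_adjacent_intervals
          (μ := MeasureTheory.volume) (a := fun k : ℕ => (k : ℝ)) (n := M)
          (f := fun x => Real.exp (-c * x ^ 2))
          (fun k _ => hcont.intervalIntegrable _ _)
        simpa using this
    _ ≤ ∫ x : ℝ, Real.exp (-c * x ^ 2) := by
        rw [intervalIntegral.integral_of_le (by positivity)]
        exact setIntegral_le_integral hInt (Filter.Eventually.of_forall fun x => by positivity)
    _ = Real.sqrt (π / c) := integral_gaussian c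

lemma pow_le_factorial_mul_exp (x : ℝ) (hx : 0 ≤ x) (n : ℕ) :
    x ^ n ≤ (n.factorial : ℝ) * Real.exp x := by
  have h1 : x ^ n / (n.factorial : ℝ) ≤ Real.exp x := by
    calc x ^ n / (n.factorial : ℝ)
        ≤ ∑ i ∈ Finset.range (n + 1), x ^ i / (i.factorial : ℝ) := by
          apply Finset.single_le_sum (f := fun i => x ^ i / (i.factorial : ℝ))
            (fun i _ => by positivity) (Finset.self_mem_range_succ n)
      _ ≤ Real.exp x := Real.sum_le_exp_of_nonneg hx _
  have hfac : (0 : ℝ) < (n.factorial : ℝ) := by positivity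
  calc x ^ n = x ^ n / (n.factorial : ℝ) * (n.factorial : ℝ) := by field_simp
    _ ≤ Real.exp x * (n.factorial : ℝ) := mul_le_mul_of_nonneg_right h1 hfac.le
    _ = (n.factorial : ℝ) * Real.exp x := by ring

/-- N-uniform bound on the Riemann sums over the nonzero Bloch
frequencies `ξ = 2πj/(NT)`, `1 ≤ |j| ≤ N/2`, of `ξ^{2n} e^{-2dξ²t}`:
`(1/N) Σ ξ^{2n} e^{-2dξ²t} ≤ C (1+t)^{-1/2-n}`. -/
theorem bloch_riemann_sum_estimate (T d : ℝ) (hT : 0 < T) (hd : 0 < d) (n : ℕ) :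
    ∃ C : ℝ, 0 < C ∧ ∀ N : ℕ, 0 < N → ∀ t : ℝ, 0 ≤ t →
      (1 / (N : ℝ)) *
        ∑ j ∈ (Finset.Icc (-(N : ℤ)) (N : ℤ)).filter
            (fun j : ℤ => 1 ≤ |j| ∧ 2 * |j| ≤ (N : ℤ)),
          ((2 * π * (j : ℝ) / ((N : ℝ) * T)) ^ (2 * n) *
            Real.exp (-2 * d * (2 * π * (j : ℝ) / ((N : ℝ) * T)) ^ 2 * t))
        ≤ C * (1 + t) ^ (-(1 / 2 : ℝ) - (n : ℝ)) := by
  have hπ : (0 : ℝ) < π := Real.pi_pos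
  refine ⟨Real.exp (2 * d * π ^ 2 / T ^ 2) * (n.factorial : ℝ) * T /
      (d ^ n * Real.sqrt (π * d)), by positivity, ?_⟩
  intro N hN t ht
  set u : ℝ := 1 + t with hu
  have hu1 : (1 : ℝ) ≤ u := by simp only [hu]; linarith
  have hu0 : (0 : ℝ) < u := by linarith
  have hNR : (0 : ℝ) < (N : ℝ) := by exact_mod_cast hN
  set F : ℤ → ℝ := fun j =>
    (2 * π * (j : ℝ) / ((N : ℝ) * T)) ^ (2 * n) *
      Real.exp (-2 * d * (2 * π * (j : ℝ) / ((N : ℝ) * T)) ^ 2 * t) with hF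
  set M : ℤ := (N : ℤ) / 2 with hM
  have hM0 : 0 ≤ M := by omega
  have hset : (Finset.Icc (-(N : ℤ)) (N : ℤ)).filter
      (fun j : ℤ => 1 ≤ |j| ∧ 2 * |j| ≤ (N : ℤ))
      = Finset.Icc (-M) (-1) ∪ Finset.Icc 1 M := by
    ext j
    simp only [Finset.mem_filter, Finset.mem_Icc, Finset.mem_union]
    rcases abs_cases j with ⟨h1, h2⟩ | ⟨h1, h2⟩ <;> rw [h1] <;> omega
  have hneg : Finset.Icc (-M) (-1) = (Finset.Icc (1 : ℤ) M).map
      ⟨Neg.neg, neg_injective⟩ := by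
    ext j
    simp only [Finset.mem_Icc, Finset.mem_map, Function.Embedding.coeFn_mk]
    constructor
    · intro hj; exact ⟨-j, ⟨by omega, by omega⟩, by omega⟩
    · rintro ⟨a, ⟨h1, h2⟩, rfl⟩; omega
  have hdisj : Disjoint (Finset.Icc (-M) (-1)) (Finset.Icc (1 : ℤ) M) := by
    rw [Finset.disjoint_left]
    intro j hj hj'
    simp only [Finset.mem_Icc] at hj hj'
    omega
  have hFeven : ∀ a : ℤ, F (-a) = F a := by
    intro a
    have hcast : ((-a : ℤ) : ℝ) = -(a : ℝ) := by push_cast; ring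
    have h1 : 2 * π * ((-a : ℤ) : ℝ) / ((N : ℝ) * T)
        = -(2 * π * (a : ℝ) / ((N : ℝ) * T)) := by rw [hcast]; ring
    simp only [hF, h1, Even.neg_pow (even_two_mul n), neg_sq]
  have hsum2 : ∑ j ∈ (Finset.Icc (-(N : ℤ)) (N : ℤ)).filter
      (fun j : ℤ => 1 ≤ |j| ∧ 2 * |j| ≤ (N : ℤ)), F j
      = 2 * ∑ j ∈ Finset.Icc (1 : ℤ) M, F j := by
    rw [hset, Finset.sum_union hdisj, hneg, Finset.sum_map]
    simp only [Function.Embedding.coeFn_mk]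
    rw [Finset.sum_congr rfl fun a _ => hFeven a]
    ring
  set c : ℝ := d * u * (2 * π / ((N : ℝ) * T)) ^ 2 with hc
  have hcpos : 0 < c := by positivity
  set K : ℝ := Real.exp (2 * d * π ^ 2 / T ^ 2) * ((n.factorial : ℝ) / (d * u) ^ n) with hK
  have hKpos : 0 < K := by positivity
  -- termwise bound
  have hterm : ∀ k : ℤ, k ∈ Finset.Icc (1 : ℤ) M →
      F k ≤ K * Real.exp (-c * (k : ℝ) ^ 2) := by
    intro k hk
    simp only [Finset.mem_Icc] at hk
    have hk1 : (1 : ℝ) ≤ (k : ℝ) := by exact_mod_cast hk.1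
    set ξ : ℝ := 2 * π * (k : ℝ) / ((N : ℝ) * T) with hξ
    have hξpos : 0 < ξ := div_pos (by positivity) (by positivity)
    have h2k : 2 * (k : ℝ) ≤ (N : ℝ) := by exact_mod_cast (by omega : 2 * k ≤ (N : ℤ))
    have hξle : ξ ≤ π / T := by
      rw [hξ, div_le_div_iff₀ (by positivity) hT]
      nlinarith [mul_le_mul_of_nonneg_right h2k (mul_pos hπ hT).le]
    have hξsq : ξ ^ 2 ≤ π ^ 2 / T ^ 2 := by
      have := pow_le_pow_left₀ hξpos.le hξle 2
      simpa [div_pow] using this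
    have hsplit : Real.exp (-2 * d * ξ ^ 2 * t)
        = Real.exp (2 * d * ξ ^ 2) * Real.exp (-d * ξ ^ 2 * u) * Real.exp (-d * ξ ^ 2 * u) := by
      rw [← Real.exp_add, ← Real.exp_add]; congr 1; rw [hu]; ring
    have hE : Real.exp (2 * d * ξ ^ 2) ≤ Real.exp (2 * d * π ^ 2 / T ^ 2) := by
      apply Real.exp_le_exp.2
      rw [show 2 * d * π ^ 2 / T ^ 2 = 2 * (d * (π ^ 2 / T ^ 2)) by ring]
      have h := mul_le_mul_of_nonneg_left hξsq hd.le
      linarith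
    have key : (d * u * ξ ^ 2) ^ n * Real.exp (-d * ξ ^ 2 * u) ≤ (n.factorial : ℝ) := by
      calc (d * u * ξ ^ 2) ^ n * Real.exp (-d * ξ ^ 2 * u)
          ≤ (n.factorial : ℝ) * Real.exp (d * u * ξ ^ 2) * Real.exp (-d * ξ ^ 2 * u) :=
            mul_le_mul_of_nonneg_right
              (pow_le_factorial_mul_exp _ (by positivity) n) (Real.exp_nonneg _)
        _ = (n.factorial : ℝ) := by
            rw [mul_assoc, ← Real.exp_add,
              show d * u * ξ ^ 2 + -d * ξ ^ 2 * u = 0 by ring, Real.exp_zero, mul_one]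
    have hpow : ξ ^ (2 * n) * Real.exp (-d * ξ ^ 2 * u)
        ≤ (n.factorial : ℝ) / (d * u) ^ n := by
      have h2 : ξ ^ (2 * n) = (d * u * ξ ^ 2) ^ n / (d * u) ^ n := by
        rw [mul_pow, pow_mul]
        field_simp
      rw [h2, div_mul_eq_mul_div]
      gcongr
    have hkc : Real.exp (-d * ξ ^ 2 * u) = Real.exp (-c * (k : ℝ) ^ 2) := by
      congr 1
      rw [hξ, hc]; ring
    calc F k = Real.exp (2 * d * ξ ^ 2) * (ξ ^ (2 * n) * Real.exp (-d * ξ ^ 2 * u)) *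
          Real.exp (-d * ξ ^ 2 * u) := by
          show ξ ^ (2 * n) * Real.exp (-2 * d * ξ ^ 2 * t) = _
          rw [hsplit]; ring
      _ ≤ Real.exp (2 * d * π ^ 2 / T ^ 2) * ((n.factorial : ℝ) / (d * u) ^ n) *
          Real.exp (-d * ξ ^ 2 * u) :=
          mul_le_mul_of_nonneg_right
            (mul_le_mul hE hpow (by positivity) (Real.exp_nonneg _)) (Real.exp_nonneg _)
      _ = K * Real.exp (-c * (k : ℝ) ^ 2) := by rw [hK, hkc]
  have hgauss : ∑ j ∈ Finset.Icc (1 : ℤ) M, Real.exp (-c * (j : ℝ) ^ 2)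
      ≤ Real.sqrt (π / c) := by
    have hinj : Function.Injective (fun k : ℕ => (k : ℤ) + 1) := fun a b h => by simpa using h
    have hmap : Finset.Icc (1 : ℤ) M = (Finset.range M.toNat).map
        (⟨fun k : ℕ => (k : ℤ) + 1, hinj⟩ : ℕ ↪ ℤ) := by
      ext j
      simp only [Finset.mem_Icc, Finset.mem_map, Finset.mem_range, Function.Embedding.coeFn_mk]
      constructor
      · intro hj; exact ⟨(j - 1).toNat, by omega, by omega⟩
      · rintro ⟨a, ha, rfl⟩; omega
    rw [hmap, Finset.sum_map]
    simp only [Function.Embedding.coeFn_mk]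
    have hcast : ∀ a : ℕ, Real.exp (-c * ((((a : ℤ) + 1) : ℤ) : ℝ) ^ 2)
        = Real.exp (-c * ((a : ℝ) + 1) ^ 2) := by
      intro a; push_cast; ring_nf
    rw [Finset.sum_congr rfl fun a _ => hcast a]
    exact gauss_sum_le c hcpos M.toNat
  have hsqc : Real.sqrt (π / c) = (N : ℝ) * T / (2 * (Real.sqrt (π * d) * Real.sqrt u)) := by
    have hval : π / c = ((N : ℝ) * T / (2 * (Real.sqrt (π * d) * Real.sqrt u))) ^ 2 := by
      rw [hc]
      conv_rhs => rw [div_pow, mul_pow, mul_pow, mul_pow,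
        Real.sq_sqrt (show (0:ℝ) ≤ π * d by positivity), Real.sq_sqrt hu0.le]
      field_simp
    rw [hval, Real.sqrt_sq (by positivity)]
  have hsumle : ∑ j ∈ Finset.Icc (1 : ℤ) M, F j
      ≤ K * ((N : ℝ) * T / (2 * (Real.sqrt (π * d) * Real.sqrt u))) := by
    calc ∑ j ∈ Finset.Icc (1 : ℤ) M, F j
        ≤ ∑ j ∈ Finset.Icc (1 : ℤ) M, K * Real.exp (-c * (j : ℝ) ^ 2) :=
          Finset.sum_le_sum hterm
      _ = K * ∑ j ∈ Finset.Icc (1 : ℤ) M, Real.exp (-c * (j : ℝ) ^ 2) := by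
          rw [Finset.mul_sum]
      _ ≤ K * ((N : ℝ) * T / (2 * (Real.sqrt (π * d) * Real.sqrt u))) :=
          mul_le_mul_of_nonneg_left (hgauss.trans_eq hsqc) hKpos.le
  have hrpow : u ^ (-(1 / 2 : ℝ) - (n : ℝ)) = 1 / (Real.sqrt u * u ^ n) := by
    rw [show (-(1 / 2 : ℝ) - (n : ℝ)) = -((1 / 2 : ℝ) + (n : ℝ)) by ring,
      Real.rpow_neg hu0.le, Real.rpow_add hu0, Real.rpow_natCast, ← Real.sqrt_eq_rpow, one_div]
  have hsπd : Real.sqrt (π * d) ≠ 0 := by positivity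
  have hsu : Real.sqrt u ≠ 0 := by positivity
  calc (1 / (N : ℝ)) * ∑ j ∈ (Finset.Icc (-(N : ℤ)) (N : ℤ)).filter
        (fun j : ℤ => 1 ≤ |j| ∧ 2 * |j| ≤ (N : ℤ)), F j
      = (2 / (N : ℝ)) * ∑ j ∈ Finset.Icc (1 : ℤ) M, F j := by rw [hsum2]; ring
    _ ≤ (2 / (N : ℝ)) * (K * ((N : ℝ) * T / (2 * (Real.sqrt (π * d) * Real.sqrt u)))) :=
        mul_le_mul_of_nonneg_left hsumle (by positivity)
    _ = Real.exp (2 * d * π ^ 2 / T ^ 2) * (n.factorial : ℝ) * T /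
        (d ^ n * Real.sqrt (π * d)) * u ^ (-(1 / 2 : ℝ) - (n : ℝ)) := by
        rw [hrpow, hK, mul_pow]
        field_simp
end
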